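/- arXiv:2207.07972 — 2 statements merged into one kernel-verified Lean document; each statement's English description precedes it below -/
import Mathlib

section
/- Let f : ℝ^d → ℝ be measurable and bounded, G ~ N(0, σ²I), and fix ε > 0. Then for every perturbation δ with ‖δ‖₂ < ε, the median smoothing satisfies h̲_{Φ(−ε/σ)}(x) ≤ h_{50%}(x+δ), where Φ is the standard Gaussian CDF. (Corollary 1 of the paper: certified lower bound on the median-smoothed trigger set accuracy under an ℓ₂-bounded parameter perturbation.) -/
open MeasureTheory ProbabilityTheory

noncomputable def gaussVec (d : ℕ) (σ : ℝ) : Measure (EuclideanSpace ℝ (Fin d)) :=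
  (Measure.pi fun _ : Fin d => gaussianReal 0 (⟨σ ^ 2, sq_nonneg σ⟩ : NNReal)).map
    (MeasurableEquiv.toLp 2 (Fin d → ℝ))

/-- Standard Gaussian CDF Φ. -/
noncomputable def Phi : ℝ → ℝ := fun x => cdf (gaussianReal 0 1) x

/-- Inverse of the standard Gaussian CDF. -/
noncomputable def PhiInv : ℝ → ℝ := Function.invFun Phi

/-- Lower percentile smoothing. -/
noncomputable def lowerPct {d : ℕ} (μ : Measure (EuclideanSpace ℝ (Fin d)))
    (f : EuclideanSpace ℝ (Fin d) → ℝ) (p : ℝ) (x : EuclideanSpace ℝ (Fin d)) : ℝ :=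
  sSup {y : ℝ | (μ {g | f (x + g) ≤ y}).toReal ≤ p}

/-- Upper percentile smoothing. -/
noncomputable def upperPct {d : ℕ} (μ : Measure (EuclideanSpace ℝ (Fin d)))
    (f : EuclideanSpace ℝ (Fin d) → ℝ) (p : ℝ) (x : EuclideanSpace ℝ (Fin d)) : ℝ :=
  sInf {y : ℝ | p ≤ (μ {g | f (x + g) ≤ y}).toReal}

open Set
open scoped ENNReal NNReal Real RealInnerProductSpace

theorem lintegral_pi_prod {n : ℕ} (μ : Fin n → Measure ℝ) [∀ i, SigmaFinite (μ i)]
    (g : Fin n → ℝ → ℝ≥0∞) (hg : ∀ i, Measurable (g i)) :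
    ∫⁻ x, ∏ i, g i (x i) ∂Measure.pi μ = ∏ i, ∫⁻ x, g i x ∂μ i := by
  induction n with
  | zero => simp
  | succ n ih =>
    have h := (measurePreserving_piFinSuccAbove μ 0).symm
    have hF : Measurable fun x : Fin (n+1) → ℝ => ∏ i, g i (x i) :=
      Finset.measurable_prod _ fun i _ => (hg i).comp (measurable_pi_apply i)
    have hmeas2 : Measurable fun w : Fin n → ℝ => ∏ x : Fin n, g x.succ (w x) :=
      Finset.measurable_prod _ fun i _ => (hg _).comp (measurable_pi_apply i)
    rw [← h.map_eq, lintegral_map hF (MeasurableEquiv.measurable _)]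
    simp_rw [MeasurableEquiv.piFinSuccAbove_symm_apply, Fin.insertNthEquiv,
      Fin.prod_univ_succ, Fin.insertNth_zero]
    simp only [Fin.zero_succAbove, Equiv.coe_fn_mk, Fin.cons_zero, Fin.cons_succ, cast_eq]
    exact (lintegral_prod_mul (hg 0).aemeasurable hmeas2.aemeasurable).trans
      (by rw [ih (fun j => μ j.succ) (fun j => g j.succ) (fun j => hg _)])

theorem pi_gauss_eq_withDensity (d : ℕ) {v : ℝ≥0} (hv : v ≠ 0) :
    (Measure.pi fun _ : Fin d => gaussianReal 0 v) =
      (Measure.pi fun _ : Fin d => (volume : Measure ℝ)).withDensity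
        (fun x => ∏ i, gaussianPDF 0 v (x i)) := by
  refine Measure.pi_eq (μ := fun _ : Fin d => gaussianReal 0 v) fun s hs => ?_
  rw [withDensity_apply _ (MeasurableSet.univ_pi hs)]
  have hind : ∀ x : Fin d → ℝ, (univ.pi s).indicator (fun x => ∏ i, gaussianPDF 0 v (x i)) x
      = ∏ i, (s i).indicator (gaussianPDF 0 v) (x i) := by
    intro x
    by_cases hx : x ∈ univ.pi s
    · rw [indicator_of_mem hx]
      exact Finset.prod_congr rfl fun i _ => (indicator_of_mem (hx i (Set.mem_univ i)) _).symm
    · rw [indicator_of_notMem hx]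
      obtain ⟨i, hi⟩ := by simpa [Set.mem_pi] using hx
      exact (Finset.prod_eq_zero (Finset.mem_univ i) (by simp [indicator_of_notMem hi])).symm
  rw [← lintegral_indicator (MeasurableSet.univ_pi hs)]
  simp_rw [hind]
  rw [lintegral_pi_prod _ _ (fun i => (measurable_gaussianPDF 0 v).indicator (hs i))]
  refine Finset.prod_congr rfl fun i _ => ?_
  rw [lintegral_indicator (hs i), ← gaussianReal_apply 0 hv]

theorem map_withDensity_equiv {α β : Type*} [MeasurableSpace α] [MeasurableSpace β]
    (μ : Measure α) (e : α ≃ᵐ β) (f : α → ℝ≥0∞) (hf : Measurable f) :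
    (μ.withDensity f).map e = (μ.map e).withDensity (f ∘ e.symm) := by
  ext s hs
  rw [Measure.map_apply e.measurable hs, withDensity_apply _ (e.measurable hs),
    withDensity_apply _ hs, setLIntegral_map hs (hf.comp e.symm.measurable) e.measurable]
  refine setLIntegral_congr_fun (e.measurable hs) (fun x _ => ?_)
  simp

noncomputable def gaussDens (d : ℕ) (σ : ℝ) (g : EuclideanSpace ℝ (Fin d)) : ℝ≥0∞ :=
  ENNReal.ofReal (((√(2 * π * σ ^ 2))⁻¹) ^ d * Real.exp (-‖g‖ ^ 2 / (2 * σ ^ 2)))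

theorem measurable_gaussDens (d : ℕ) (σ : ℝ) : Measurable (gaussDens d σ) := by
  apply Measurable.ennreal_ofReal
  exact (((measurable_norm.pow_const _).neg.div_const _).exp.const_mul _)

theorem prod_gaussianPDF_eq (d : ℕ) (σ : ℝ) (hσ : 0 < σ) (g : EuclideanSpace ℝ (Fin d)) :
    (∏ i, gaussianPDF 0 (⟨σ ^ 2, sq_nonneg σ⟩ : NNReal) (g i)) = gaussDens d σ g := by
  simp only [gaussianPDF, gaussDens]
  rw [← ENNReal.ofReal_prod_of_nonneg
    (f := fun i => gaussianPDFReal 0 (⟨σ ^ 2, sq_nonneg σ⟩ : NNReal) (g i))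
    (fun i _ => gaussianPDFReal_nonneg _ _ _)]
  congr 1
  simp only [gaussianPDFReal, sub_zero, NNReal.coe_mk]
  have hnorm : ‖g‖ ^ 2 = ∑ i, g i ^ 2 := by
    rw [EuclideanSpace.norm_eq, Real.sq_sqrt (Finset.sum_nonneg fun i _ => sq_nonneg _)]
    exact Finset.sum_congr rfl fun i _ => sq_abs _
  rw [Finset.prod_mul_distrib, Finset.prod_const, ← Real.exp_sum]
  congr 2
  · simp
  · rw [hnorm, ← Finset.sum_div, Finset.sum_neg_distrib]
    rfl

theorem gaussVec_eq_withDensity (d : ℕ) {σ : ℝ} (hσ : 0 < σ) :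
    gaussVec d σ = (volume : Measure (EuclideanSpace ℝ (Fin d))).withDensity (gaussDens d σ) := by
  have hv : (⟨σ ^ 2, sq_nonneg σ⟩ : NNReal) ≠ 0 := by
    exact fun h => (pow_ne_zero 2 hσ.ne') (congrArg NNReal.toReal h)
  rw [gaussVec, pi_gauss_eq_withDensity d hv,
    map_withDensity_equiv _ (MeasurableEquiv.toLp 2 (Fin d → ℝ))
      (fun x : Fin d → ℝ => ∏ i, gaussianPDF 0 (⟨σ ^ 2, sq_nonneg σ⟩ : NNReal) (x i))
      (Finset.measurable_prod _ fun i _ =>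
        (measurable_gaussianPDF _ _).comp (measurable_pi_apply i))]
  have h1 : (Measure.pi fun _ : Fin d => (volume : Measure ℝ)).map
      (MeasurableEquiv.toLp 2 (Fin d → ℝ)) = volume := by
    rw [← MeasureTheory.volume_pi]
    exact ((EuclideanSpace.volume_preserving_symm_measurableEquiv_toLp (Fin d)).symm _).map_eq
  rw [h1]
  congr 1
  ext g
  simpa using prod_gaussianPDF_eq d σ hσ g

instance gaussVec_prob (d : ℕ) (σ : ℝ) : IsProbabilityMeasure (gaussVec d σ) := by
  rw [gaussVec]
  have hp : ∀ v : NNReal, IsProbabilityMeasure (Measure.pi fun _ : Fin d => gaussianReal 0 v) :=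
    fun v => inferInstance
  haveI := hp ⟨σ ^ 2, sq_nonneg σ⟩
  exact Measure.isProbabilityMeasure_map (MeasurableEquiv.measurable _).aemeasurable

theorem gaussVec_map_isometry (d : ℕ) {σ : ℝ} (hσ : 0 < σ)
    (U : EuclideanSpace ℝ (Fin d) ≃ₗᵢ[ℝ] EuclideanSpace ℝ (Fin d)) :
    (gaussVec d σ).map U = gaussVec d σ := by
  rw [gaussVec_eq_withDensity d hσ]
  set e : EuclideanSpace ℝ (Fin d) ≃ᵐ EuclideanSpace ℝ (Fin d) :=
    U.toHomeomorph.toMeasurableEquiv with he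
  have hcoe : (⇑e : _ → _) = ⇑U := rfl
  have hsymm : (⇑e.symm : _ → _) = ⇑U.symm := rfl
  rw [← hcoe, map_withDensity_equiv _ e _ (measurable_gaussDens d σ)]
  have h1 : (volume : Measure (EuclideanSpace ℝ (Fin d))).map e = volume := by
    rw [hcoe]; exact U.measurePreserving.map_eq
  rw [h1]
  congr 1
  ext g
  simp only [Function.comp_apply, hsymm, gaussDens, LinearIsometryEquiv.norm_map]

theorem gaussVec_map_add (d : ℕ) {σ : ℝ} (hσ : 0 < σ) (δ : EuclideanSpace ℝ (Fin d)) :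
    (gaussVec d σ).map (δ + ·) = (gaussVec d σ).withDensity
      (fun g => ENNReal.ofReal (Real.exp ((2 * ⟪g, δ⟫ - ‖δ‖ ^ 2) / (2 * σ ^ 2)))) := by
  have hr : Measurable fun g : EuclideanSpace ℝ (Fin d) =>
      ENNReal.ofReal (Real.exp ((2 * ⟪g, δ⟫ - ‖δ‖ ^ 2) / (2 * σ ^ 2))) := by
    apply Measurable.ennreal_ofReal
    apply Real.measurable_exp.comp
    apply Measurable.div_const
    exact (((continuous_id.inner continuous_const).measurable).const_mul 2).sub_const _
  rw [gaussVec_eq_withDensity d hσ]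
  set e : EuclideanSpace ℝ (Fin d) ≃ᵐ EuclideanSpace ℝ (Fin d) :=
    (Homeomorph.addLeft δ).toMeasurableEquiv with he
  have hcoe : (⇑e : _ → _) = (δ + ·) := rfl
  have hsymm : (⇑e.symm : _ → _) = (-δ + ·) := rfl
  rw [← hcoe, map_withDensity_equiv _ e _ (measurable_gaussDens d σ)]
  have h1 : (volume : Measure (EuclideanSpace ℝ (Fin d))).map e = volume := by
    rw [hcoe]; exact map_add_left_eq_self volume δ
  rw [h1, ← withDensity_mul _ (measurable_gaussDens d σ) hr]
  congr 1
  ext g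
  simp only [Function.comp_apply, hsymm, gaussDens, Pi.mul_apply]
  rw [← ENNReal.ofReal_mul (by positivity)]
  congr 1
  have h3 : Real.exp (-‖-δ + g‖ ^ 2 / (2 * σ ^ 2)) = Real.exp (-‖g‖ ^ 2 / (2 * σ ^ 2)) *
      Real.exp ((2 * ⟪g, δ⟫ - ‖δ‖ ^ 2) / (2 * σ ^ 2)) := by
    rw [← Real.exp_add]
    congr 1
    have h2 : ‖-δ + g‖ ^ 2 = ‖g‖ ^ 2 - 2 * ⟪g, δ⟫ + ‖δ‖ ^ 2 := by
      rw [neg_add_eq_sub, norm_sub_sq_real]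
    rw [h2]
    have hs : (2 : ℝ) * σ ^ 2 ≠ 0 := by positivity
    field_simp
    ring
  rw [h3, ← mul_assoc]

theorem gauss_symm : (gaussianReal 0 1).map (fun t : ℝ => -1 * t) = gaussianReal 0 1 := by
  rw [gaussianReal_map_const_mul (-1)]
  norm_num

theorem gauss_Ici (a : ℝ) : ((gaussianReal 0 1) {t | a ≤ t}).toReal = Phi (-a) := by
  have hm : MeasurableSet {t : ℝ | a ≤ t} := measurableSet_Ici
  have h1 : (gaussianReal 0 1) {t | a ≤ t}
      = (gaussianReal 0 1) (Iic (-a)) := by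
    conv_lhs => rw [← gauss_symm]
    rw [Measure.map_apply (by fun_prop) hm]
    congr 1
    ext t
    simp only [Set.mem_preimage, Set.mem_setOf_eq, Set.mem_Iic]
    constructor
    · intro h; linarith
    · intro h; linarith
  rw [h1, Phi, cdf_eq_real, measureReal_def]

theorem Phi_nonneg (a : ℝ) : 0 ≤ Phi a := by
  rw [Phi, cdf_eq_real, measureReal_def]; exact ENNReal.toReal_nonneg

theorem Phi_mono : Monotone Phi := by
  intro a b hab
  simp only [Phi, cdf_eq_real, measureReal_def]
  exact ENNReal.toReal_mono (measure_ne_top _ _) (measure_mono (Set.Iic_subset_Iic.2 hab))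

instance gauss_noAtoms : NullSingletonClass (gaussianReal 0 1) :=
  ⟨fun x => (gaussianReal_absolutelyContinuous 0 one_ne_zero) (measure_singleton x)⟩

theorem Phi_zero : Phi 0 = 1 / 2 := by
  have h1 : (gaussianReal 0 1) (Iic 0) + (gaussianReal 0 1) (Ioi 0) = 1 := by
    rw [← measure_union (Set.Iic_disjoint_Ioi le_rfl) measurableSet_Ioi, Set.Iic_union_Ioi,
      measure_univ]
  have h2 : (gaussianReal 0 1) (Ioi 0) = (gaussianReal 0 1) (Iic 0) := by
    rw [measure_congr (Ioi_ae_eq_Ici (μ := gaussianReal 0 1) (a := 0))]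
    have := gauss_Ici 0
    rw [Phi, cdf_eq_real, measureReal_def] at this
    have h3 : ((gaussianReal 0 1) (Ici 0)).toReal = ((gaussianReal 0 1) (Iic (-0))).toReal := this
    rw [neg_zero] at h3
    exact (ENNReal.toReal_eq_toReal_iff' (measure_ne_top _ _) (measure_ne_top _ _)).mp h3
  rw [h2, ← two_mul] at h1
  have h4 : ((2 : ℝ≥0∞) * (gaussianReal 0 1) (Iic 0)).toReal = 1 := by rw [h1]; simp
  rw [ENNReal.toReal_mul] at h4
  have : Phi 0 = ((gaussianReal 0 1) (Iic 0)).toReal := by rw [Phi, cdf_eq_real, measureReal_def]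
  rw [this]
  simp only [ENNReal.toReal_ofNat] at h4
  linarith

-- coordinate marginal of gaussVec

theorem gaussVec_marginal (d : ℕ) (σ : ℝ) (i₀ : Fin d) {T : Set ℝ} (hT : MeasurableSet T) :
    (gaussVec d σ) {h | h i₀ ∈ T} = gaussianReal 0 (⟨σ ^ 2, sq_nonneg σ⟩ : NNReal) T := by
  have hmeas : Measurable fun h : EuclideanSpace ℝ (Fin d) => h i₀ :=
    (measurable_pi_apply i₀).comp (MeasurableEquiv.toLp 2 (Fin d → ℝ)).symm.measurable
  have hset : MeasurableSet {h : EuclideanSpace ℝ (Fin d) | h i₀ ∈ T} := hmeas hT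
  rw [gaussVec, Measure.map_apply (MeasurableEquiv.measurable _) hset]
  have hpre : (MeasurableEquiv.toLp 2 (Fin d → ℝ)) ⁻¹'
      {h : EuclideanSpace ℝ (Fin d) | h i₀ ∈ T}
      = univ.pi (Function.update (fun _ : Fin d => (univ : Set ℝ)) i₀ T) := by
    ext x
    simp only [Set.mem_preimage, Set.mem_setOf_eq, Set.mem_pi, Set.mem_univ, forall_true_left]
    constructor
    · intro hx i
      by_cases hi : i = i₀
      · subst hi; rw [Function.update_self]; exact hx
      · rw [Function.update_of_ne hi]; trivial
    · intro hx
      have := hx i₀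
      rwa [Function.update_self] at this
  have hs : ∀ v : NNReal, ∀ _ : Fin d, SigmaFinite (gaussianReal 0 v) := fun v _ => inferInstance
  haveI := hs ⟨σ ^ 2, sq_nonneg σ⟩
  rw [hpre, @Measure.pi_pi _ _ _ _
    (fun _ : Fin d => gaussianReal 0 (⟨σ ^ 2, sq_nonneg σ⟩ : NNReal)) this]
  have hu : ∀ v : NNReal, gaussianReal 0 v univ = 1 := fun v => measure_univ
  rw [Finset.prod_eq_single i₀ (fun j _ hj => by rw [Function.update_of_ne hj]; exact hu _)
    (fun h => absurd (Finset.mem_univ i₀) h)]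
  rw [Function.update_self]

theorem measurable_inner_right {d : ℕ} (δ : EuclideanSpace ℝ (Fin d)) :
    Measurable fun g : EuclideanSpace ℝ (Fin d) => ⟪g, δ⟫ :=
  (continuous_id.inner continuous_const).measurable

theorem gauss1d_scaled {σ : ℝ} (hσ : 0 < σ) {b : ℝ} (hb : 0 < b) (c : ℝ) :
    ((gaussianReal 0 (⟨σ ^ 2, sq_nonneg σ⟩ : NNReal)) {t | c ≤ b * t}).toReal
      = Phi (-(c / (σ * b))) := by
  have hmap : (gaussianReal 0 1).map (fun t : ℝ => σ * t)
      = gaussianReal 0 (⟨σ ^ 2, sq_nonneg σ⟩ : NNReal) := by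
    rw [gaussianReal_map_const_mul σ]
    rw [mul_zero, mul_one]
    rfl
  have hm : MeasurableSet {t : ℝ | c ≤ b * t} := by
    have : {t : ℝ | c ≤ b * t} = (fun t => b * t) ⁻¹' (Ici c) := rfl
    rw [this]; exact (measurable_const_mul b) measurableSet_Ici
  rw [← hmap, Measure.map_apply (by fun_prop) hm]
  have hpre : (fun t : ℝ => σ * t) ⁻¹' {t | c ≤ b * t} = {t | c / (σ * b) ≤ t} := by
    ext t
    simp only [Set.mem_preimage, Set.mem_setOf_eq]
    rw [div_le_iff₀ (by positivity)]
    constructor <;> intro h <;> nlinarith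
  rw [hpre, gauss_Ici]

theorem gaussVec_halfspace (d : ℕ) {σ : ℝ} (hσ : 0 < σ) {δ : EuclideanSpace ℝ (Fin d)}
    (hδ : δ ≠ 0) (c : ℝ) :
    ((gaussVec d σ) {g | c ≤ ⟪g, δ⟫}).toReal = Phi (-(c / (σ * ‖δ‖))) := by
  have hd : d ≠ 0 := by
    rintro rfl
    exact hδ (Subsingleton.elim _ _)
  let i₀ : Fin d := ⟨0, Nat.pos_of_ne_zero hd⟩
  have hδn : (0 : ℝ) < ‖δ‖ := norm_pos_iff.mpr hδ
  -- unit vector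
  set u : EuclideanSpace ℝ (Fin d) := ‖δ‖⁻¹ • δ with hu
  have hun : ‖u‖ = 1 := by
    rw [hu, norm_smul, norm_inv, norm_norm, inv_mul_cancel₀ hδn.ne']
  -- build orthonormal basis with b i₀ = u
  have hcard : Module.finrank ℝ (EuclideanSpace ℝ (Fin d)) = Fintype.card (Fin d) := by
    simp [finrank_euclideanSpace]
  have horth : Orthonormal ℝ (({i₀} : Set (Fin d)).restrict (fun _ => u)) := by
    constructor
    · intro i; exact hun
    · intro i j hij
      exact absurd (Subtype.ext ((i.2 : (i : Fin d) ∈ ({i₀} : Set (Fin d))).trans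
        ((j.2 : (j : Fin d) ∈ ({i₀} : Set (Fin d))).symm))) hij
  obtain ⟨b, hb⟩ := Orthonormal.exists_orthonormalBasis_extension_of_card_eq hcard horth
  have hbu : b i₀ = u := hb i₀ rfl
  set U : EuclideanSpace ℝ (Fin d) ≃ₗᵢ[ℝ] EuclideanSpace ℝ (Fin d) := b.repr.symm with hU
  have hsingle : U (EuclideanSpace.single i₀ (1 : ℝ)) = u := by
    rw [hU, ← hbu, ← OrthonormalBasis.repr_symm_single]
  have hS : MeasurableSet {g : EuclideanSpace ℝ (Fin d) | c ≤ ⟪g, δ⟫} :=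
    measurable_inner_right δ measurableSet_Ici
  have step1 : (gaussVec d σ) {g | c ≤ ⟪g, δ⟫}
      = (gaussVec d σ) {h | c ≤ ‖δ‖ * h i₀} := by
    conv_lhs => rw [← gaussVec_map_isometry d hσ U]
    rw [Measure.map_apply U.continuous.measurable hS]
    congr 1
    ext h
    simp only [Set.mem_preimage, Set.mem_setOf_eq]
    have : ⟪U h, δ⟫ = ‖δ‖ * h i₀ := by
      have hδu : δ = ‖δ‖ • u := by
        rw [hu, smul_smul, mul_inv_cancel₀ hδn.ne', one_smul]
      conv_lhs => rw [hδu]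
      rw [real_inner_smul_right, ← hsingle, LinearIsometryEquiv.inner_map_map,
        EuclideanSpace.inner_single_right]
      simp
    rw [this]
  have hT : MeasurableSet {t : ℝ | c ≤ ‖δ‖ * t} := by
    have : {t : ℝ | c ≤ ‖δ‖ * t} = (fun t => ‖δ‖ * t) ⁻¹' (Ici c) := rfl
    rw [this]; exact (measurable_const_mul _) measurableSet_Ici
  have step2 : (gaussVec d σ) {h | c ≤ ‖δ‖ * h i₀}
      = gaussianReal 0 (⟨σ ^ 2, sq_nonneg σ⟩ : NNReal) {t | c ≤ ‖δ‖ * t} :=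
    gaussVec_marginal d σ i₀ hT
  rw [step1, step2, gauss1d_scaled hσ hδn c]

theorem NP_compare {α : Type*} [MeasurableSpace α] {μ : Measure α} [IsProbabilityMeasure μ]
    {r : α → ℝ≥0∞} (hr : Measurable r) {A H : Set α} (hA : MeasurableSet A)
    (hH : MeasurableSet H) {R : ℝ≥0∞}
    (hout : ∀ g ∉ H, r g ≤ R) (hin : ∀ g ∈ H, R ≤ r g) (hAH : μ A ≤ μ H) :
    μ.withDensity r A ≤ μ.withDensity r H := by
  rw [withDensity_apply _ hA, withDensity_apply _ hH]
  have hdisj1 : Disjoint (A ∩ H) (A \ H) :=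
    Set.disjoint_of_subset_left Set.inter_subset_right disjoint_sdiff_self_right
  have hdisj2 : Disjoint (A ∩ H) (H \ A) :=
    Set.disjoint_of_subset_left Set.inter_subset_left disjoint_sdiff_self_right
  have hsplitA : ∫⁻ g in A, r g ∂μ = ∫⁻ g in A ∩ H, r g ∂μ + ∫⁻ g in A \ H, r g ∂μ := by
    rw [← lintegral_union (hA.diff hH) hdisj1, Set.inter_union_diff]
  have hsplitH : ∫⁻ g in H, r g ∂μ = ∫⁻ g in A ∩ H, r g ∂μ + ∫⁻ g in H \ A, r g ∂μ := by
    rw [← lintegral_union (hH.diff hA) hdisj2, Set.inter_comm, Set.inter_union_diff]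
  have hb1 : ∫⁻ g in A \ H, r g ∂μ ≤ R * μ (A \ H) := by
    calc ∫⁻ g in A \ H, r g ∂μ ≤ ∫⁻ _ in A \ H, R ∂μ :=
          setLIntegral_mono measurable_const fun g hg => hout g hg.2
      _ = R * μ (A \ H) := setLIntegral_const _ _
  have hb2 : R * μ (H \ A) ≤ ∫⁻ g in H \ A, r g ∂μ := by
    calc R * μ (H \ A) = ∫⁻ _ in H \ A, R ∂μ := (setLIntegral_const _ _).symm
      _ ≤ ∫⁻ g in H \ A, r g ∂μ := setLIntegral_mono hr fun g hg => hin g hg.1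
  have hmeasle : μ (A \ H) ≤ μ (H \ A) := by
    have h1 : μ (A ∩ H) + μ (A \ H) = μ A := measure_inter_add_diff A hH
    have h2 : μ (A ∩ H) + μ (H \ A) = μ H := by
      rw [Set.inter_comm]; exact measure_inter_add_diff H hA
    have := hAH
    rw [← h1, ← h2] at this
    exact (ENNReal.add_le_add_iff_left (measure_ne_top μ _)).mp this
  calc ∫⁻ g in A, r g ∂μ = ∫⁻ g in A ∩ H, r g ∂μ + ∫⁻ g in A \ H, r g ∂μ := hsplitA
    _ ≤ ∫⁻ g in A ∩ H, r g ∂μ + R * μ (A \ H) := add_le_add_right hb1 _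
    _ ≤ ∫⁻ g in A ∩ H, r g ∂μ + R * μ (H \ A) :=
        add_le_add_right (mul_le_mul_right hmeasle R) _
    _ ≤ ∫⁻ g in A ∩ H, r g ∂μ + ∫⁻ g in H \ A, r g ∂μ := add_le_add_right hb2 _
    _ = ∫⁻ g in H, r g ∂μ := hsplitH.symm

theorem key_step (d : ℕ) {σ : ℝ} (hσ : 0 < σ) {ε : ℝ} (hε : 0 < ε)
    {δ : EuclideanSpace ℝ (Fin d)} (hδ : ‖δ‖ < ε) {A : Set (EuclideanSpace ℝ (Fin d))}
    (hA : MeasurableSet A) (hle : ((gaussVec d σ) A).toReal ≤ Phi (-ε / σ)) :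
    ((gaussVec d σ) {g | δ + g ∈ A}).toReal ≤ 1 / 2 := by
  by_cases hδ0 : δ = 0
  · subst hδ0
    simp only [zero_add, Set.setOf_mem_eq]
    refine hle.trans ?_
    rw [← Phi_zero]
    exact Phi_mono (by rw [neg_div]; simp [div_nonneg hε.le hσ.le])
  · have hδn : (0 : ℝ) < ‖δ‖ := norm_pos_iff.mpr hδ0
    set μ := gaussVec d σ
    set r : EuclideanSpace ℝ (Fin d) → ℝ≥0∞ :=
      fun g => ENNReal.ofReal (Real.exp ((2 * ⟪g, δ⟫ - ‖δ‖ ^ 2) / (2 * σ ^ 2))) with hrdef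
    have hr : Measurable r := by
      apply Measurable.ennreal_ofReal
      exact (Real.measurable_exp.comp
        ((((measurable_inner_right δ).const_mul 2).sub_const _).div_const _))
    set t : ℝ := ε * ‖δ‖ with ht
    set H : Set (EuclideanSpace ℝ (Fin d)) := {g | t ≤ ⟪g, δ⟫} with hHdef
    have hH : MeasurableSet H := measurable_inner_right δ measurableSet_Ici
    -- μ H = Phi (-ε/σ)
    have hμH : (μ H).toReal = Phi (-ε / σ) := by
      rw [gaussVec_halfspace d hσ hδ0 t]
      congr 1
      rw [ht, neg_div]
      congr 1
      field_simp
    -- μ A ≤ μ H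
    have hAH : μ A ≤ μ H := by
      refine (ENNReal.toReal_le_toReal (measure_ne_top _ _) (measure_ne_top _ _)).mp ?_
      rw [hμH]; exact hle
    -- shifted measures
    have hmapA : (μ.map (δ + ·)) A = μ {g | δ + g ∈ A} := by
      rw [Measure.map_apply (measurable_const_add δ) hA]; rfl
    have hmapH : (μ.map (δ + ·)) H = μ {g | t - ‖δ‖ ^ 2 ≤ ⟪g, δ⟫} := by
      rw [Measure.map_apply (measurable_const_add δ) hH]
      congr 1
      ext g
      simp only [Set.mem_preimage, hHdef, Set.mem_setOf_eq, inner_add_left,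
        real_inner_self_eq_norm_sq]
      constructor <;> intro h <;> linarith
    -- NP comparison
    set R : ℝ≥0∞ := ENNReal.ofReal (Real.exp ((2 * t - ‖δ‖ ^ 2) / (2 * σ ^ 2))) with hR
    have hout : ∀ g ∉ H, r g ≤ R := by
      intro g hg
      simp only [hHdef, Set.mem_setOf_eq, not_le] at hg
      exact ENNReal.ofReal_le_ofReal (Real.exp_le_exp.mpr
        (div_le_div_of_nonneg_right (by linarith) (by positivity)))
    have hin : ∀ g ∈ H, R ≤ r g := by
      intro g hg
      simp only [hHdef, Set.mem_setOf_eq] at hg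
      exact ENNReal.ofReal_le_ofReal (Real.exp_le_exp.mpr
        (div_le_div_of_nonneg_right (by linarith) (by positivity)))
    have hNP := NP_compare hr hA hH hout hin hAH
    rw [← gaussVec_map_add d hσ δ, hmapA, hmapH] at hNP
    have hfin : (μ {g | t - ‖δ‖ ^ 2 ≤ ⟪g, δ⟫}).toReal ≤ 1 / 2 := by
      rw [gaussVec_halfspace d hσ hδ0, ← Phi_zero]
      apply Phi_mono
      have hnn : 0 ≤ (t - ‖δ‖ ^ 2) / (σ * ‖δ‖) := by
        apply div_nonneg _ (by positivity)
        have hsq : ‖δ‖ ^ 2 = ‖δ‖ * ‖δ‖ := sq ‖δ‖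
        rw [ht]
        nlinarith
      linarith
    exact le_trans (ENNReal.toReal_mono (measure_ne_top _ _) hNP) hfin

theorem median_smoothing_certified_lower_bound (d : ℕ) (σ : ℝ) (hσ : 0 < σ)
    (f : EuclideanSpace ℝ (Fin d) → ℝ) (hf : Measurable f)
    (hb : ∃ C : ℝ, ∀ θ, |f θ| ≤ C) (ε : ℝ) (hε : 0 < ε)
    (x δ : EuclideanSpace ℝ (Fin d)) (hδ : ‖δ‖ < ε) :
    lowerPct (gaussVec d σ) f (Phi (-ε / σ)) x ≤
      lowerPct (gaussVec d σ) f (1 / 2) (x + δ) := by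
  obtain ⟨C, hC⟩ := hb
  rw [lowerPct, lowerPct]
  have hCnn : 0 ≤ C := le_trans (abs_nonneg _) (hC 0)
  apply csSup_le_csSup
  · -- BddAbove
    refine ⟨C, fun y hy => ?_⟩
    simp only [Set.mem_setOf_eq] at hy
    by_contra hyC
    push_neg at hyC
    have huniv : {g : EuclideanSpace ℝ (Fin d) | f (x + δ + g) ≤ y} = Set.univ := by
      ext g
      simp only [Set.mem_setOf_eq, Set.mem_univ, iff_true]
      have := (abs_le.mp (hC (x + δ + g))).2
      linarith
    rw [huniv, measure_univ] at hy
    norm_num at hy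
  · -- Nonempty
    refine ⟨-C - 1, ?_⟩
    simp only [Set.mem_setOf_eq]
    have hempty : {g : EuclideanSpace ℝ (Fin d) | f (x + g) ≤ -C - 1} = ∅ := by
      ext g
      simp only [Set.mem_setOf_eq, Set.mem_empty_iff_false, iff_false, not_le]
      have := (abs_le.mp (hC (x + g))).1
      linarith
    rw [hempty, measure_empty]
    simpa using Phi_nonneg (-ε / σ)
  · -- subset
    intro y hy
    simp only [Set.mem_setOf_eq] at hy ⊢
    have hA : MeasurableSet {g : EuclideanSpace ℝ (Fin d) | f (x + g) ≤ y} := by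
      have : {g : EuclideanSpace ℝ (Fin d) | f (x + g) ≤ y}
          = (fun g => f (x + g)) ⁻¹' (Iic y) := rfl
      rw [this]
      exact (hf.comp (measurable_const_add x)) measurableSet_Iic
    have := key_step d hσ hε hδ hA hy
    have hsets : {g : EuclideanSpace ℝ (Fin d) | δ + g ∈
        {g : EuclideanSpace ℝ (Fin d) | f (x + g) ≤ y}}
        = {g : EuclideanSpace ℝ (Fin d) | f (x + δ + g) ≤ y} := by
      ext g
      simp only [Set.mem_setOf_eq, add_assoc]
    rwa [hsets] at this
end

section
/- If f : ℝ^d → [0,1] is K-Lipschitz in ℓ₂ norm, then for every p ∈ (0,1), its lower p-percentile Gaussian smoothing h̲_p is also K-Lipschitz: |h̲_p(x) − h̲_p(x')| ≤ K‖x − x'‖₂. -/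
open MeasureTheory ProbabilityTheory

lemma gaussVec_prob_s14 (d : ℕ) (σ : ℝ) : IsProbabilityMeasure (gaussVec d σ) := by
  unfold gaussVec
  have : IsProbabilityMeasure
      (Measure.pi fun _ : Fin d => gaussianReal 0 (⟨σ ^ 2, sq_nonneg σ⟩ : NNReal)) :=
    @Measure.pi.instIsProbabilityMeasure _ _ _ _ _ (fun _ => instIsProbabilityMeasureGaussianReal _ _)
  exact Measure.isProbabilityMeasure_map (MeasurableEquiv.measurable _).aemeasurable

lemma lowerPct_key (d : ℕ) (σ : ℝ) (K : NNReal) (f : EuclideanSpace ℝ (Fin d) → ℝ)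
    (hf : LipschitzWith K f) (hrange : ∀ x, f x ∈ Set.Icc (0 : ℝ) 1)
    (p : ℝ) (hp : 0 < p) (hp1 : p < 1) (x x' : EuclideanSpace ℝ (Fin d)) :
    lowerPct (gaussVec d σ) f p x ≤ lowerPct (gaussVec d σ) f p x' + K * dist x x' := by
  have hprob := gaussVec_prob_s14 d σ
  set μ := gaussVec d σ
  set S : EuclideanSpace ℝ (Fin d) → Set ℝ :=
    fun z => {y : ℝ | (μ {g | f (z + g) ≤ y}).toReal ≤ p} with hS
  have hne : ∀ z, (S z).Nonempty := by
    intro z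
    refine ⟨-1, ?_⟩
    have : {g | f (z + g) ≤ (-1 : ℝ)} = ∅ := by
      ext g
      simp only [Set.mem_setOf_eq, Set.mem_empty_iff_false, iff_false, not_le]
      linarith [(hrange (z + g)).1]
    simp [hS, this, hp.le]
  have hbdd : ∀ z, BddAbove (S z) := by
    intro z
    refine ⟨1, fun y hy => ?_⟩
    by_contra hy1
    push_neg at hy1
    have : {g | f (z + g) ≤ y} = Set.univ := by
      ext g
      simp only [Set.mem_setOf_eq, Set.mem_univ, iff_true]
      linarith [(hrange (z + g)).2]
    simp only [hS, Set.mem_setOf_eq, this, measure_univ, ENNReal.toReal_one] at hy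
    linarith
  have hsub : ∀ y ∈ S x, y - K * dist x x' ∈ S x' := by
    intro y hy
    simp only [hS, Set.mem_setOf_eq] at hy ⊢
    have hincl : {g | f (x' + g) ≤ y - K * dist x x'} ⊆ {g | f (x + g) ≤ y} := by
      intro g hg
      simp only [Set.mem_setOf_eq] at hg ⊢
      have hd : dist (f (x + g)) (f (x' + g)) ≤ K * dist x x' := by
        have := hf.dist_le_mul (x + g) (x' + g)
        simpa [dist_add_right] using this
      have := abs_sub_le_iff.1 (by simpa [Real.dist_eq] using hd)
      linarith [this.1]
    calc (μ {g | f (x' + g) ≤ y - K * dist x x'}).toReal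
        ≤ (μ {g | f (x + g) ≤ y}).toReal :=
          ENNReal.toReal_mono (measure_ne_top μ _) (measure_mono hincl)
      _ ≤ p := hy
  refine csSup_le (hne x) fun y hy => ?_
  have h2 : y - K * dist x x' ≤ lowerPct μ f p x' := le_csSup (hbdd x') (hsub y hy)
  linarith

theorem lowerPct_preserves_lipschitz (d : ℕ) (σ : ℝ) (hσ : 0 < σ)
    (K : NNReal) (f : EuclideanSpace ℝ (Fin d) → ℝ)
    (hf : LipschitzWith K f) (hrange : ∀ x, f x ∈ Set.Icc (0 : ℝ) 1)
    (p : ℝ) (hp : 0 < p) (hp1 : p < 1) :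
    LipschitzWith K (lowerPct (gaussVec d σ) f p) := by
  refine LipschitzWith.of_dist_le_mul fun x x' => ?_
  rw [Real.dist_eq, abs_sub_le_iff]
  constructor
  · linarith [lowerPct_key d σ K f hf hrange p hp hp1 x x']
  · have := lowerPct_key d σ K f hf hrange p hp hp1 x' x
    rw [dist_comm] at this
    linarith
end
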